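/- Let m ≥ 2 be an integer, κ ∈ ℝ, λ > 0, α > 0, and R > 0; if κ > 0 assume in addition √κ·R < π/2 and √κ·tan(√κ·R) < α. Let u : [0,R] → ℝ be smooth (the restriction of a C^∞ function on an open interval containing [0,R]), positive on [0,R], with u'(0) = 0, u'(R) + α·u(R) = 0, and satisfying the ODE u''(r) + (m−1)·(sn_κ'(r)/sn_κ(r))·u'(r) = −λ·u(r) for all r ∈ (0,R). Then u''(r)·sn_κ(r) − u'(r)·sn_κ'(r) > 0 for every r ∈ (0,R]. -/

import Mathlib

open Set Filter

/-- The generalized sine function `sn_κ` of the simply connected space form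
of constant sectional curvature `κ`. -/
noncomputable def sn (κ : ℝ) : ℝ → ℝ := fun r =>
  if 0 < κ then Real.sin (Real.sqrt κ * r) / Real.sqrt κ
  else if κ = 0 then r
  else Real.sinh (Real.sqrt (-κ) * r) / Real.sqrt (-κ)

noncomputable def snd (κ : ℝ) : ℝ → ℝ := fun r =>
  if 0 < κ then Real.cos (Real.sqrt κ * r)
  else if κ = 0 then 1
  else Real.cosh (Real.sqrt (-κ) * r)

lemma sn_hasDerivAt (κ r : ℝ) : HasDerivAt (sn κ) (snd κ r) r := by
  rcases lt_trichotomy 0 κ with h | h | h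
  · have hs : Real.sqrt κ ≠ 0 := ne_of_gt (Real.sqrt_pos.mpr h)
    have h1 : HasDerivAt (fun x : ℝ => Real.sin (Real.sqrt κ * x) / Real.sqrt κ)
        (Real.cos (Real.sqrt κ * r) * (Real.sqrt κ * 1) / Real.sqrt κ) r :=
      (((Real.hasDerivAt_sin _).comp r ((hasDerivAt_id r).const_mul _))).div_const _
    unfold sn snd
    simp only [if_pos h]
    convert h1 using 1
    field_simp
  · subst h
    unfold sn snd
    simp only [if_neg (lt_irrefl (0:ℝ)), if_pos rfl]
    exact hasDerivAt_id' r
  · have hs : Real.sqrt (-κ) ≠ 0 := ne_of_gt (Real.sqrt_pos.mpr (by linarith))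
    have h1 : HasDerivAt (fun x : ℝ => Real.sinh (Real.sqrt (-κ) * x) / Real.sqrt (-κ))
        (Real.cosh (Real.sqrt (-κ) * r) * (Real.sqrt (-κ) * 1) / Real.sqrt (-κ)) r :=
      (((Real.hasDerivAt_sinh _).comp r ((hasDerivAt_id r).const_mul _))).div_const _
    unfold sn snd
    simp only [if_neg (by linarith : ¬ 0 < κ), if_neg (by linarith : κ ≠ 0)]
    convert h1 using 1
    field_simp

lemma snd_hasDerivAt (κ r : ℝ) : HasDerivAt (snd κ) (-κ * sn κ r) r := by
  rcases lt_trichotomy 0 κ with h | h | h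
  · have hs : Real.sqrt κ * Real.sqrt κ = κ := Real.mul_self_sqrt h.le
    have h1 : HasDerivAt (fun x : ℝ => Real.cos (Real.sqrt κ * x))
        (-Real.sin (Real.sqrt κ * r) * (Real.sqrt κ * 1)) r :=
      (Real.hasDerivAt_cos _).comp r ((hasDerivAt_id r).const_mul _)
    unfold sn snd
    simp only [if_pos h]
    convert h1 using 1
    have hs0 : Real.sqrt κ ≠ 0 := ne_of_gt (Real.sqrt_pos.mpr h)
    field_simp
    linear_combination (Real.sin (Real.sqrt κ * r)) * hs
  · subst h
    unfold sn snd
    simp only [if_neg (lt_irrefl (0:ℝ)), if_pos rfl]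
    simpa using (hasDerivAt_const r (1:ℝ))
  · have hs : Real.sqrt (-κ) * Real.sqrt (-κ) = -κ := Real.mul_self_sqrt (by linarith)
    have h1 : HasDerivAt (fun x : ℝ => Real.cosh (Real.sqrt (-κ) * x))
        (Real.sinh (Real.sqrt (-κ) * r) * (Real.sqrt (-κ) * 1)) r :=
      (Real.hasDerivAt_cosh _).comp r ((hasDerivAt_id r).const_mul _)
    unfold sn snd
    simp only [if_neg (by linarith : ¬ 0 < κ), if_neg (by linarith : κ ≠ 0)]
    convert h1 using 1
    have hs0 : Real.sqrt (-κ) ≠ 0 := ne_of_gt (Real.sqrt_pos.mpr (by linarith))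
    field_simp
    linear_combination (-Real.sinh (Real.sqrt (-κ) * r)) * hs

lemma deriv_sn (κ : ℝ) : deriv (sn κ) = snd κ :=
  funext fun r => (sn_hasDerivAt κ r).deriv

lemma sn_zero (κ : ℝ) : sn κ 0 = 0 := by
  simp [sn]

lemma sn_cont (κ : ℝ) : Continuous (sn κ) :=
  continuous_iff_continuousAt.mpr fun r => (sn_hasDerivAt κ r).continuousAt

lemma snd_cont (κ : ℝ) : Continuous (snd κ) :=
  continuous_iff_continuousAt.mpr fun r => (snd_hasDerivAt κ r).continuousAt

lemma sn_pos {κ R r : ℝ} (hκ : 0 < κ → Real.sqrt κ * R < Real.pi / 2)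
    (h0 : 0 < r) (hr : r ≤ R) : 0 < sn κ r := by
  rcases lt_trichotomy 0 κ with h | h | h
  · have hs := Real.sqrt_pos.mpr h
    have hx : 0 < Real.sqrt κ * r := by positivity
    have hx2 : Real.sqrt κ * r < Real.pi := by
      have := hκ h
      nlinarith [Real.pi_pos, mul_le_mul_of_nonneg_left hr hs.le]
    unfold sn
    simp only [if_pos h]
    exact div_pos (Real.sin_pos_of_pos_of_lt_pi hx hx2) hs
  · subst h
    unfold sn
    simp only [if_neg (lt_irrefl (0:ℝ)), if_pos rfl]
    exact h0
  · have hs := Real.sqrt_pos.mpr (by linarith : (0:ℝ) < -κ)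
    unfold sn
    simp only [if_neg (by linarith : ¬ 0 < κ), if_neg (by linarith : κ ≠ 0)]
    exact div_pos (Real.sinh_pos_iff.mpr (by positivity)) hs

lemma snd_pos {κ R r : ℝ} (hκ : 0 < κ → Real.sqrt κ * R < Real.pi / 2)
    (h0 : 0 ≤ r) (hr : r ≤ R) : 0 < snd κ r := by
  rcases lt_trichotomy 0 κ with h | h | h
  · have hs := Real.sqrt_pos.mpr h
    unfold snd
    simp only [if_pos h]
    apply Real.cos_pos_of_mem_Ioo
    constructor
    · nlinarith [Real.pi_pos]
    · have := hκ h
      nlinarith [mul_le_mul_of_nonneg_left hr hs.le]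
  · subst h
    unfold snd
    simp only [if_neg (lt_irrefl (0:ℝ)), if_pos rfl]
    norm_num
  · unfold snd
    simp only [if_neg (by linarith : ¬ 0 < κ), if_neg (by linarith : κ ≠ 0)]
    exact Real.cosh_pos _

/-- a positive first Robin eigenfunction is strictly convex in the
reparametrizing variable `s` (with `s' = sn_κ`): `u'' sn_κ - u' sn_κ' > 0` on `(0, R]`. -/
theorem stmt11 (m : ℕ) (hm : 2 ≤ m) (κ lam α R a b : ℝ)
    (hlam : 0 < lam) (hα : 0 < α) (hR : 0 < R)
    (hκ : 0 < κ →
      Real.sqrt κ * R < Real.pi / 2 ∧ Real.sqrt κ * Real.tan (Real.sqrt κ * R) < α)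
    (ha : a < 0) (hb : R < b)
    (u : ℝ → ℝ) (hu : ContDiffOn ℝ (⊤ : ℕ∞) u (Set.Ioo a b))
    (hpos : ∀ r ∈ Set.Icc (0:ℝ) R, 0 < u r)
    (hu'0 : deriv u 0 = 0)
    (hbc : deriv u R + α * u R = 0)
    (hode : ∀ r ∈ Set.Ioo (0:ℝ) R,
      deriv (deriv u) r + ((m : ℝ) - 1) * (deriv (sn κ) r / sn κ r) * deriv u r
        = -lam * u r) :
    ∀ r ∈ Set.Ioc (0:ℝ) R,
      0 < deriv (deriv u) r * sn κ r - deriv u r * deriv (sn κ) r := by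
  obtain ⟨k, rfl⟩ : ∃ k, m = k + 2 := ⟨m - 2, by omega⟩
  have hIcc : Set.Icc (0:ℝ) R ⊆ Set.Ioo a b := fun x hx =>
    ⟨lt_of_lt_of_le ha hx.1, lt_of_le_of_lt hx.2 hb⟩
  have hsub : Set.Ioo (0:ℝ) R ⊆ Set.Ioo a b := fun x hx =>
    hIcc ⟨hx.1.le, hx.2.le⟩
  have hu1 : ContDiffOn ℝ (⊤ : ℕ∞) (deriv u) (Set.Ioo a b) :=
    hu.deriv_of_isOpen isOpen_Ioo (by simp)
  have hdu : ∀ x ∈ Set.Ioo a b, HasDerivAt u (deriv u x) x := fun x hx =>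
    ((hu.contDiffAt (isOpen_Ioo.mem_nhds hx)).differentiableAt (by simp)).hasDerivAt
  have hdu' : ∀ x ∈ Set.Ioo a b, HasDerivAt (deriv u) (deriv (deriv u) x) x := fun x hx =>
    ((hu1.contDiffAt (isOpen_Ioo.mem_nhds hx)).differentiableAt (by simp)).hasDerivAt
  have hcu : ContinuousOn u (Set.Ioo a b) := hu.continuousOn
  have hcu' : ContinuousOn (deriv u) (Set.Ioo a b) := hu1.continuousOn
  have hu2 : ContDiffOn ℝ (⊤ : ℕ∞) (deriv (deriv u)) (Set.Ioo a b) :=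
    hu1.deriv_of_isOpen isOpen_Ioo (by simp)
  have hcu'' : ContinuousOn (deriv (deriv u)) (Set.Ioo a b) := hu2.continuousOn
  rw [deriv_sn] at hode ⊢
  have hsnpos : ∀ x ∈ Set.Ioc (0:ℝ) R, 0 < sn κ x := fun x hx =>
    sn_pos (fun h => (hκ h).1) hx.1 hx.2
  have hsndpos : ∀ x ∈ Set.Icc (0:ℝ) R, 0 < snd κ x := fun x hx =>
    snd_pos (fun h => (hκ h).1) hx.1 hx.2
  -- the ODE multiplied through by sn
  have hode' : ∀ x ∈ Set.Ioo (0:ℝ) R,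
      deriv (deriv u) x * sn κ x
        = -lam * u x * sn κ x - ((k:ℝ)+1) * (snd κ x * deriv u x) := by
    intro x hx
    have h0 := hode x hx
    have hs : sn κ x ≠ 0 := (hsnpos x ⟨hx.1, hx.2.le⟩).ne'
    field_simp at h0
    push_cast at h0 ⊢
    linear_combination h0
  -- u' < 0 on (0, R]
  have hu'neg : ∀ x ∈ Set.Ioc (0:ℝ) R, deriv u x < 0 := by
    have hF : ∀ x ∈ Set.Ioo (0:ℝ) R,
        HasDerivAt (fun y => deriv u y * sn κ y ^ (k+1))
          (-lam * u x * sn κ x ^ (k+1)) x := by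
      intro x hx
      have h1 := (hdu' x (hsub hx)).mul ((sn_hasDerivAt κ x).pow (k+1))
      refine h1.congr_deriv ?_
      symm
      simp only [Pi.pow_apply]
      have h0' := hode' x hx
      push_cast
      linear_combination (-(sn κ x ^ k)) * h0'
    have hcont : ContinuousOn (fun y => deriv u y * sn κ y ^ (k+1)) (Set.Icc 0 R) :=
      (hcu'.mono hIcc).mul (((sn_cont κ).continuousOn).pow _)
    have hanti : StrictAntiOn (fun y => deriv u y * sn κ y ^ (k+1)) (Set.Icc 0 R) := by
      apply strictAntiOn_of_deriv_neg (convex_Icc 0 R) hcont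
      intro x hx
      rw [interior_Icc] at hx
      rw [(hF x hx).deriv]
      have h1 := hpos x ⟨hx.1.le, hx.2.le⟩
      have h2 : (0:ℝ) < sn κ x ^ (k+1) := pow_pos (hsnpos x ⟨hx.1, hx.2.le⟩) _
      nlinarith [mul_pos (mul_pos hlam h1) h2]
    intro x hx
    have h1 := hanti (left_mem_Icc.mpr hR.le) ⟨hx.1.le, hx.2⟩ hx.1
    simp only [hu'0, zero_mul] at h1
    nlinarith [pow_pos (hsnpos x hx) (k+1)]
  -- the function G = q * sn^(k+1)
  set G : ℝ → ℝ := fun y =>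
    (-lam * (u y * sn κ y) - ((k:ℝ)+2) * (deriv u y * snd κ y)) * sn κ y ^ (k+1)
    with hG_def
  have hG : ∀ x ∈ Set.Ioo (0:ℝ) R,
      HasDerivAt G ((((k:ℝ)+2)*κ - lam) * sn κ x ^ (k+2) * deriv u x) x := by
    intro x hx
    have hx' := hsub hx
    have hq : HasDerivAt (fun y => -lam * (u y * sn κ y) - ((k:ℝ)+2) * (deriv u y * snd κ y))
        (-lam * (deriv u x * sn κ x + u x * snd κ x)
          - ((k:ℝ)+2) * (deriv (deriv u) x * snd κ x + deriv u x * (-κ * sn κ x))) x :=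
      (((hdu x hx').mul (sn_hasDerivAt κ x)).const_mul (-lam)).sub
        (((hdu' x hx').mul (snd_hasDerivAt κ x)).const_mul _)
    have h1 := hq.mul ((sn_hasDerivAt κ x).pow (k+1))
    refine h1.congr_deriv ?_
    symm
    simp only [Pi.pow_apply]
    have h0' := hode' x hx
    push_cast
    linear_combination (((k:ℝ)+2) * snd κ x * sn κ x ^ k) * h0'
  have hGcont : ContinuousOn G (Set.Icc 0 R) :=
    ((continuousOn_const.mul ((hcu.mono hIcc).mul ((sn_cont κ).continuousOn))).sub
      (continuousOn_const.mul ((hcu'.mono hIcc).mul ((snd_cont κ).continuousOn)))).mul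
      (((sn_cont κ).continuousOn).pow _)
  have hG0 : G 0 = 0 := by
    simp [hG_def, sn_zero]
  -- key identity on (0, R]
  have hkey : ∀ x ∈ Set.Ioc (0:ℝ) R,
      deriv (deriv u) x * sn κ x - deriv u x * snd κ x
        = -lam * (u x * sn κ x) - ((k:ℝ)+2) * (deriv u x * snd κ x) := by
    intro x hx
    rcases lt_or_eq_of_le hx.2 with hlt | heq
    · linear_combination hode' x ⟨hx.1, hlt⟩
    · subst heq
      set D : ℝ → ℝ := fun y => deriv (deriv u) y * sn κ y - deriv u y * snd κ y
          - (-lam * (u y * sn κ y) - ((k:ℝ)+2) * (deriv u y * snd κ y)) with hD_def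
      have hRb : x ∈ Set.Ioo a b := hIcc ⟨hx.1.le, le_refl x⟩
      have hDc : ContinuousOn D (Set.Ioo a b) :=
        ((hcu''.mul ((sn_cont κ).continuousOn)).sub
          (hcu'.mul ((snd_cont κ).continuousOn))).sub
          ((continuousOn_const.mul (hcu.mul ((sn_cont κ).continuousOn))).sub
            (continuousOn_const.mul (hcu'.mul ((snd_cont κ).continuousOn))))
      have h3 : Filter.Tendsto D (nhdsWithin x (Set.Ioo (0:ℝ) x)) (nhds (D x)) :=
        ((hDc.continuousAt (isOpen_Ioo.mem_nhds hRb)).continuousWithinAt)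
      have hne : (nhdsWithin x (Set.Ioo (0:ℝ) x)).NeBot := by
        rw [← mem_closure_iff_nhdsWithin_neBot, closure_Ioo hx.1.ne]
        exact ⟨hx.1.le, le_refl x⟩
      have h2 : Filter.Tendsto D (nhdsWithin x (Set.Ioo (0:ℝ) x)) (nhds 0) := by
        apply tendsto_const_nhds.congr'
        filter_upwards [self_mem_nhdsWithin] with y hy
        simp only [hD_def]
        linear_combination -(hode' y hy)
      have h4 : D x = 0 := tendsto_nhds_unique h3 h2
      simp only [hD_def] at h4
      linarith
  rcases lt_or_ge (((k:ℝ)+2)*κ) lam with hcase | hcase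
  · -- λ > mκ : G is strictly increasing
    have hmono : StrictMonoOn G (Set.Icc 0 R) := by
      apply strictMonoOn_of_deriv_pos (convex_Icc 0 R) hGcont
      intro x hx
      rw [interior_Icc] at hx
      rw [(hG x hx).deriv]
      have h1 := hu'neg x ⟨hx.1, hx.2.le⟩
      have h2 : (0:ℝ) < sn κ x ^ (k+2) := pow_pos (hsnpos x ⟨hx.1, hx.2.le⟩) _
      nlinarith [mul_pos (mul_pos (show (0:ℝ) < lam - ((k:ℝ)+2)*κ by linarith) h2)
        (show (0:ℝ) < -deriv u x by linarith)]
    intro r hr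
    have h1 := hmono (left_mem_Icc.mpr hR.le) ⟨hr.1.le, hr.2⟩ hr.1
    rw [hG0] at h1
    have h2 : (0:ℝ) < sn κ r ^ (k+1) := pow_pos (hsnpos r hr) _
    have h3 : 0 < -lam * (u r * sn κ r) - ((k:ℝ)+2) * (deriv u r * snd κ r) := by
      by_contra h
      push_neg at h
      simp only [hG_def] at h1
      nlinarith
    rw [hkey r hr]
    push_cast
    linarith
  · -- λ ≤ mκ : contradiction with the boundary condition
    exfalso
    have hκpos : 0 < κ := by nlinarith
    obtain ⟨hκ1, hκ2⟩ := hκ hκpos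
    have hanti : AntitoneOn G (Set.Icc 0 R) := by
      apply antitoneOn_of_deriv_nonpos (convex_Icc 0 R) hGcont
      · intro x hx
        rw [interior_Icc] at hx
        exact (hG x hx).differentiableAt.differentiableWithinAt
      · intro x hx
        rw [interior_Icc] at hx
        rw [(hG x hx).deriv]
        have h1 := hu'neg x ⟨hx.1, hx.2.le⟩
        have h2 : (0:ℝ) < sn κ x ^ (k+2) := pow_pos (hsnpos x ⟨hx.1, hx.2.le⟩) _
        nlinarith [mul_nonneg (mul_nonneg (show (0:ℝ) ≤ ((k:ℝ)+2)*κ - lam by linarith) h2.le)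
          (show (0:ℝ) ≤ -deriv u x by linarith)]
    have h1 := hanti (left_mem_Icc.mpr hR.le) (right_mem_Icc.mpr hR.le) hR.le
    rw [hG0] at h1
    have hsR : 0 < sn κ R := hsnpos R ⟨hR, le_refl R⟩
    have h2 : (0:ℝ) < sn κ R ^ (k+1) := pow_pos hsR _
    have hqR : -lam * (u R * sn κ R) - ((k:ℝ)+2) * (deriv u R * snd κ R) ≤ 0 := by
      by_contra h
      push_neg at h
      simp only [hG_def] at h1
      nlinarith
    have hu'R : deriv u R = -α * u R := by linarith
    have huR : 0 < u R := hpos R ⟨hR.le, le_refl R⟩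
    -- trig facts
    have hsκ : 0 < Real.sqrt κ := Real.sqrt_pos.mpr hκpos
    have hx0 : 0 < Real.sqrt κ * R := by positivity
    have hcos : 0 < Real.cos (Real.sqrt κ * R) :=
      Real.cos_pos_of_mem_Ioo ⟨by nlinarith [Real.pi_pos], hκ1⟩
    have htan : Real.sqrt κ * Real.sin (Real.sqrt κ * R) < α * Real.cos (Real.sqrt κ * R) := by
      rw [Real.tan_eq_sin_div_cos, ← mul_div_assoc] at hκ2
      exact (div_lt_iff₀ hcos).mp hκ2
    have hS : Real.sqrt κ * sn κ R = Real.sin (Real.sqrt κ * R) := by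
      unfold sn
      simp only [if_pos hκpos]
      field_simp
    have hC : snd κ R = Real.cos (Real.sqrt κ * R) := by
      unfold snd
      simp only [if_pos hκpos]
    have hκκ : Real.sqrt κ * Real.sqrt κ = κ := Real.mul_self_sqrt hκpos.le
    rw [hu'R, hC] at hqR
    have h5 : κ * sn κ R < α * Real.cos (Real.sqrt κ * R) := by
      rw [← hS, ← mul_assoc, hκκ] at htan
      exact htan
    nlinarith [mul_le_mul_of_nonneg_right hcase (mul_pos huR hsR).le,
      mul_lt_mul_of_pos_left h5 (mul_pos (show (0:ℝ) < (k:ℝ)+2 by positivity) huR)]
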